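/- arXiv:2504.01702 — 5 statements merged into one kernel-verified Lean document; each statement's English description precedes it below -/
import Mathlib

section
/- Fix a ∈ {0,1}. Suppose the mean potential outcomes satisfy m_n^(a) = ⟨λ_n, ρ_a⟩ + η_n^(a) for all n ∈ {1,…,N}, and suppose the weights β^(a) ∈ ℝ^{I^(a)} satisfy the linear span inclusion Σ_{n∈M^(1−a)} λ_n = Σ_{n∈I^(a)} β_n^(a) λ_n. Then Σ_{n∈M} m_n^(a) = Σ_{n∈M^(a)} m_n^(a) + Σ_{n∈I^(a)} β_n^(a) m_n^(a) − Σ_{n∈I^(a)} β_n^(a) η_n^(a) + Σ_{n∈M^(1−a)} η_n^(a). (This is the identification identity of Theorem 1, with conditional expectations of potential outcomes written as the deterministic means m_n^(a).) -/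
open Finset

/-! Split `M` into `M^(a)` and `M^(1-a)`. On `M^(1-a)` the factor part `⟨λ_n, ρ_a⟩` is linear
in `λ_n`, so the span inclusion transports its sum to `∑_{I^(a)} β_n ⟨λ_n, ρ_a⟩`, where each
term equals `β_n (m_n^(a) - η_n^(a))`. -/

theorem Fin.two_ne_iff_eq_one_sub (x a : Fin 2) : x ≠ a ↔ x = 1 - a := by
  revert x a; decide

theorem sum_dotProduct_eq_of_sum_eq_sum_mul {ι κ R : Type*} [Fintype κ] [CommSemiring R]
    {s t : Finset ι} {v : ι → κ → R} {β : ι → R}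
    (h : ∀ i, ∑ n ∈ s, v n i = ∑ n ∈ t, β n * v n i) (w : κ → R) :
    ∑ n ∈ s, v n ⬝ᵥ w = ∑ n ∈ t, β n * (v n ⬝ᵥ w) := by
  have hv : ∑ n ∈ s, v n = ∑ n ∈ t, β n • v n := funext fun i => by
    simpa only [Finset.sum_apply, Pi.smul_apply, smul_eq_mul] using h i
  rw [← sum_dotProduct, hv, sum_dotProduct]
  simp only [smul_dotProduct, smul_eq_mul]

/-- Identification identity, Theorem 1.
Fix a treatment `a ∈ {0,1}`.  Units are `n ∈ Fin N` with assigned treatments `A n`;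
`I^(a) = {n | A n = a}`, `M` is a subset of units, `M^(a) = M ∩ I^(a)`.
If the mean potential outcomes satisfy `m n a = ⟨λ n, ρ a⟩ + η n a` and the weights
`β` satisfy the linear span inclusion `∑_{n ∈ M^(1-a)} λ n = ∑_{n ∈ I^(a)} β n • λ n`,
then `∑_{n∈M} m n a = ∑_{n∈M^(a)} m n a + ∑_{n∈I^(a)} β n * m n a
  - ∑_{n∈I^(a)} β n * η n a + ∑_{n∈M^(1-a)} η n a`. -/
theorem stmt0
    (N r : ℕ) (a : Fin 2)
    (A : Fin N → Fin 2)
    (m η : Fin N → Fin 2 → ℝ)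
    (lam : Fin N → Fin r → ℝ) (ρ : Fin 2 → Fin r → ℝ)
    (M : Finset (Fin N))
    (β : Fin N → ℝ)
    (hm : ∀ n, m n a = (∑ i, lam n i * ρ a i) + η n a)
    (hspan : ∀ i, ∑ n ∈ M.filter (fun n => A n = 1 - a), lam n i
              = ∑ n ∈ univ.filter (fun n => A n = a), β n * lam n i) :
    ∑ n ∈ M, m n a
      = ∑ n ∈ M.filter (fun n => A n = a), m n a
        + ∑ n ∈ univ.filter (fun n => A n = a), β n * m n a
        - ∑ n ∈ univ.filter (fun n => A n = a), β n * η n a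
        + ∑ n ∈ M.filter (fun n => A n = 1 - a), η n a := by
  have hcompl : M.filter (fun n => ¬A n = a) = M.filter (fun n => A n = 1 - a) :=
    filter_congr fun n _ => Fin.two_ne_iff_eq_one_sub (A n) a
  have hfactor : ∑ n ∈ M.filter (fun n => A n = 1 - a), lam n ⬝ᵥ ρ a
      = ∑ n ∈ univ.filter (fun n => A n = a), β n * (m n a - η n a) := by
    rw [sum_dotProduct_eq_of_sum_eq_sum_mul hspan]
    refine sum_congr rfl fun n _ => ?_
    rw [hm n, add_sub_cancel_right]
    rfl
  have hmissing : ∑ n ∈ M.filter (fun n => A n = 1 - a), m n a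
      = ∑ n ∈ M.filter (fun n => A n = 1 - a), lam n ⬝ᵥ ρ a
        + ∑ n ∈ M.filter (fun n => A n = 1 - a), η n a := by
    simp only [hm, sum_add_distrib]
    rfl
  rw [← sum_filter_add_sum_filter_not M (fun n => A n = a), hcompl, hmissing, hfactor]
  simp only [mul_sub, sum_sub_distrib]
  ring
end

section
/- Suppose for both a ∈ {0,1} the mean potential outcomes satisfy m_n^(a) = ⟨λ_n, ρ_a⟩ + η_n^(a) with |η_n^(a)| ≤ Δ_E for all n, and the weights β^(a) ∈ ℝ^{I^(a)} satisfy Σ_{n∈M^(1−a)} λ_n = Σ_{n∈I^(a)} β_n^(a) λ_n. Define Observed_a = (1/M)(Σ_{n∈M^(a)} m_n^(a) + Σ_{n∈I^(a)} β_n^(a) m_n^(a)), Observed = Observed_1 − Observed_0, and ATE_M = (1/M) Σ_{n∈M} (m_n^(1) − m_n^(0)). Then |ATE_M − Observed| ≤ Δ_E · (1 + (‖β^(0)‖_1 + ‖β^(1)‖_1)/M). -/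
open Finset

/-- Corollary 1, identification bound.
Units `n ∈ Fin N` with assigned treatments `A n`; `I^(a) = {n | A n = a}`;
`M ⊆ [N]` nonempty with `M^(a) = M ∩ I^(a)`.  Mean potential outcomes satisfy
`m n a = ⟨λ n, ρ a⟩ + η n a` with `|η n a| ≤ Δ_E`, and weights `β a` satisfy the
linear span inclusion.  With
`Observed_a = (1/|M|)(∑_{n∈M^(a)} m n a + ∑_{n∈I^(a)} β a n * m n a)`,
`Observed = Observed_1 - Observed_0`, and
`ATE_M = (1/|M|) ∑_{n∈M} (m n 1 - m n 0)`, we have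
`|ATE_M - Observed| ≤ Δ_E (1 + (‖β^(0)‖₁ + ‖β^(1)‖₁)/|M|)`. -/
theorem stmt1
    (N r : ℕ) (A : Fin N → Fin 2)
    (m η : Fin N → Fin 2 → ℝ)
    (lam : Fin N → Fin r → ℝ) (ρ : Fin 2 → Fin r → ℝ)
    (M : Finset (Fin N)) (hM : M.Nonempty)
    (β : Fin 2 → Fin N → ℝ) (ΔE : ℝ)
    (hm : ∀ n (a : Fin 2), m n a = (∑ i, lam n i * ρ a i) + η n a)
    (hη : ∀ n (a : Fin 2), |η n a| ≤ ΔE)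
    (hspan : ∀ (a : Fin 2) i, ∑ n ∈ M.filter (fun n => A n = 1 - a), lam n i
              = ∑ n ∈ univ.filter (fun n => A n = a), β a n * lam n i) :
    |((1 : ℝ) / M.card) * (∑ n ∈ M, (m n 1 - m n 0))
      - (((1 : ℝ) / M.card) * (∑ n ∈ M.filter (fun n => A n = 1), m n 1
            + ∑ n ∈ univ.filter (fun n => A n = 1), β 1 n * m n 1)
        - ((1 : ℝ) / M.card) * (∑ n ∈ M.filter (fun n => A n = 0), m n 0
            + ∑ n ∈ univ.filter (fun n => A n = 0), β 0 n * m n 0))|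
      ≤ ΔE * (1 + ((∑ n ∈ univ.filter (fun n => A n = 0), |β 0 n|)
                   + ∑ n ∈ univ.filter (fun n => A n = 1), |β 1 n|) / M.card) := by
  obtain ⟨n0, hn0⟩ := hM
  have hΔ : 0 ≤ ΔE := le_trans (abs_nonneg _) (hη n0 1)
  have hc : (0:ℝ) < (M.card : ℝ) := by
    exact_mod_cast Finset.card_pos.mpr ⟨n0, hn0⟩
  -- key identity for each treatment
  have key : ∀ a b : Fin 2,
      (∀ i, ∑ n ∈ M.filter (fun n => A n = b), lam n i
          = ∑ n ∈ univ.filter (fun n => A n = a), β a n * lam n i) →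
      (∑ n ∈ M.filter (fun n => A n = b), m n a)
        - ∑ n ∈ univ.filter (fun n => A n = a), β a n * m n a
      = (∑ n ∈ M.filter (fun n => A n = b), η n a)
        - ∑ n ∈ univ.filter (fun n => A n = a), β a n * η n a := by
    intro a b hs
    have h1 : ∑ n ∈ M.filter (fun n => A n = b), ∑ i, lam n i * ρ a i
        = ∑ n ∈ univ.filter (fun n => A n = a), β a n * ∑ i, lam n i * ρ a i := by
      calc ∑ n ∈ M.filter (fun n => A n = b), ∑ i, lam n i * ρ a i
          = ∑ i, (∑ n ∈ M.filter (fun n => A n = b), lam n i) * ρ a i := by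
            rw [Finset.sum_comm]; simp [Finset.sum_mul]
        _ = ∑ i, (∑ n ∈ univ.filter (fun n => A n = a), β a n * lam n i) * ρ a i := by
            simp_rw [hs]
        _ = ∑ n ∈ univ.filter (fun n => A n = a), β a n * ∑ i, lam n i * ρ a i := by
            simp_rw [Finset.sum_mul, Finset.mul_sum]
            rw [Finset.sum_comm]
            simp [mul_assoc]
    simp_rw [hm, mul_add, Finset.sum_add_distrib]
    rw [h1]; ring
  have e1 := key 1 0 (by simpa using hspan 1)
  have e0 := key 0 1 (by simpa using hspan 0)
  -- partition of M
  have hfe : M.filter (fun n => A n = 0) = M.filter (fun n => ¬ A n = 1) := by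
    apply Finset.filter_congr
    intro n _
    have := (A n).isLt
    simp only [Fin.ext_iff, Fin.val_one, Fin.val_zero]
    omega
  have hpart : ∀ f : Fin N → ℝ, ∑ n ∈ M, f n
      = ∑ n ∈ M.filter (fun n => A n = 1), f n
        + ∑ n ∈ M.filter (fun n => A n = 0), f n := by
    intro f
    rw [hfe, Finset.sum_filter_add_sum_filter_not]
  have hcard : ((M.filter (fun n => A n = 1)).card : ℝ)
      + ((M.filter (fun n => A n = 0)).card : ℝ) = (M.card : ℝ) := by
    rw [hfe]
    exact_mod_cast Finset.card_filter_add_card_filter_not (p := fun n => A n = 1)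
  -- rewrite the difference
  have hsum1 := hpart (fun n => m n 1)
  have hsum0 := hpart (fun n => m n 0)
  have main : ((1 : ℝ) / M.card) * (∑ n ∈ M, (m n 1 - m n 0))
      - (((1 : ℝ) / M.card) * (∑ n ∈ M.filter (fun n => A n = 1), m n 1
            + ∑ n ∈ univ.filter (fun n => A n = 1), β 1 n * m n 1)
        - ((1 : ℝ) / M.card) * (∑ n ∈ M.filter (fun n => A n = 0), m n 0
            + ∑ n ∈ univ.filter (fun n => A n = 0), β 0 n * m n 0))
      = ((1 : ℝ) / M.card) *
        (((∑ n ∈ M.filter (fun n => A n = 0), η n 1)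
          - ∑ n ∈ univ.filter (fun n => A n = 1), β 1 n * η n 1)
        - ((∑ n ∈ M.filter (fun n => A n = 1), η n 0)
          - ∑ n ∈ univ.filter (fun n => A n = 0), β 0 n * η n 0)) := by
    rw [Finset.sum_sub_distrib, hsum1, hsum0, ← e1, ← e0]
    ring
  rw [main]
  -- bounds
  have b1 : |∑ n ∈ M.filter (fun n => A n = 0), η n 1|
      ≤ ((M.filter (fun n => A n = 0)).card : ℝ) * ΔE := by
    calc |∑ n ∈ M.filter (fun n => A n = 0), η n 1|
        ≤ ∑ n ∈ M.filter (fun n => A n = 0), |η n 1| := Finset.abs_sum_le_sum_abs _ _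
      _ ≤ ∑ n ∈ M.filter (fun n => A n = 0), ΔE := Finset.sum_le_sum fun n _ => hη n 1
      _ = _ := by rw [Finset.sum_const, nsmul_eq_mul]
  have b0 : |∑ n ∈ M.filter (fun n => A n = 1), η n 0|
      ≤ ((M.filter (fun n => A n = 1)).card : ℝ) * ΔE := by
    calc |∑ n ∈ M.filter (fun n => A n = 1), η n 0|
        ≤ ∑ n ∈ M.filter (fun n => A n = 1), |η n 0| := Finset.abs_sum_le_sum_abs _ _
      _ ≤ ∑ n ∈ M.filter (fun n => A n = 1), ΔE := Finset.sum_le_sum fun n _ => hη n 0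
      _ = _ := by rw [Finset.sum_const, nsmul_eq_mul]
  have bβ : ∀ a : Fin 2, |∑ n ∈ univ.filter (fun n => A n = a), β a n * η n a|
      ≤ ΔE * ∑ n ∈ univ.filter (fun n => A n = a), |β a n| := by
    intro a
    calc |∑ n ∈ univ.filter (fun n => A n = a), β a n * η n a|
        ≤ ∑ n ∈ univ.filter (fun n => A n = a), |β a n * η n a| :=
          Finset.abs_sum_le_sum_abs _ _
      _ ≤ ∑ n ∈ univ.filter (fun n => A n = a), |β a n| * ΔE := by
          apply Finset.sum_le_sum
          intro n _
          rw [abs_mul]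
          exact mul_le_mul_of_nonneg_left (hη n a) (abs_nonneg _)
      _ = ΔE * ∑ n ∈ univ.filter (fun n => A n = a), |β a n| := by
          rw [← Finset.sum_mul, mul_comm]
  have habs : |(((∑ n ∈ M.filter (fun n => A n = 0), η n 1)
          - ∑ n ∈ univ.filter (fun n => A n = 1), β 1 n * η n 1)
        - ((∑ n ∈ M.filter (fun n => A n = 1), η n 0)
          - ∑ n ∈ univ.filter (fun n => A n = 0), β 0 n * η n 0))|
      ≤ (M.card : ℝ) * ΔE
        + ΔE * ((∑ n ∈ univ.filter (fun n => A n = 0), |β 0 n|)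
            + ∑ n ∈ univ.filter (fun n => A n = 1), |β 1 n|) := by
    have := bβ 0
    have := bβ 1
    have h := abs_sub (M.card : ℝ)
    calc |(((∑ n ∈ M.filter (fun n => A n = 0), η n 1)
          - ∑ n ∈ univ.filter (fun n => A n = 1), β 1 n * η n 1)
        - ((∑ n ∈ M.filter (fun n => A n = 1), η n 0)
          - ∑ n ∈ univ.filter (fun n => A n = 0), β 0 n * η n 0))|
        ≤ (|∑ n ∈ M.filter (fun n => A n = 0), η n 1|
            + |∑ n ∈ univ.filter (fun n => A n = 1), β 1 n * η n 1|)
          + (|∑ n ∈ M.filter (fun n => A n = 1), η n 0|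
            + |∑ n ∈ univ.filter (fun n => A n = 0), β 0 n * η n 0|) := by
          apply (abs_sub _ _).trans
          gcongr <;> exact abs_sub _ _
      _ ≤ (((M.filter (fun n => A n = 0)).card : ℝ) * ΔE
            + ΔE * ∑ n ∈ univ.filter (fun n => A n = 1), |β 1 n|)
          + (((M.filter (fun n => A n = 1)).card : ℝ) * ΔE
            + ΔE * ∑ n ∈ univ.filter (fun n => A n = 0), |β 0 n|) := by
          gcongr <;> first | exact b1 | exact b0 | exact bβ 1 | exact bβ 0
      _ = (M.card : ℝ) * ΔE
        + ΔE * ((∑ n ∈ univ.filter (fun n => A n = 0), |β 0 n|)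
            + ∑ n ∈ univ.filter (fun n => A n = 1), |β 1 n|) := by
          rw [← hcard]; ring
  rw [abs_mul, abs_of_pos (by positivity : (0:ℝ) < (1:ℝ)/M.card)]
  have step := mul_le_mul_of_nonneg_left habs
    (le_of_lt (by positivity : (0:ℝ) < 1/(M.card:ℝ)))
  refine step.trans_eq ?_
  field_simp
end

section
/- Suppose for both a ∈ {0,1}: m_n^(a) = ⟨λ_n, ρ_a⟩ + η_n^(a) with |η_n^(a)| ≤ Δ_E for all n; the weights β^(a) ∈ ℝ^{I^(a)} satisfy Σ_{n∈M^(1−a)} λ_n = Σ_{n∈I^(a)} β_n^(a) λ_n; and the observed outcomes are Y_n = m_n^(a) + ε_n^(a) for n ∈ I^(a), where ε_n^(a) ∈ ℝ. Let β̂^(a) ∈ ℝ^{I^(a)} be arbitrary vectors, set Δ_{β^(a)} = β̂^(a) − β^(a), and define the estimator ÂTE_M = (1/M)(Σ_{n∈M^(1)} Y_n + Σ_{n∈I^(1)} β̂_n^(1) Y_n) − (1/M)(Σ_{n∈M^(0)} Y_n + Σ_{n∈I^(0)} β̂_n^(0) Y_n) and the estimand ATE_M = (1/M) Σ_{n∈M}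 (m_n^(1) − m_n^(0)). Then |ÂTE_M − ATE_M| ≤ Δ_E (1 + (‖β^(0)‖_1 + ‖β^(1)‖_1)/M) + Σ_{a∈{0,1}} (1/M) | Σ_{n∈M^(a)} ε_n^(a) + ⟨β^(a), ε_{I^(a)}⟩ + ⟨Δ_{β^(a)}, ε_{I^(a)}⟩ + ⟨Δ_{β^(a)}, m^(a)_{I^(a)}⟩ |, where ε_{I^(a)} = (ε_n^(a))_{n∈I^(a)} and m^(a)_{I^(a)} = (m_n^(a))_{n∈I^(a)}. -/
/-!
In arm `a`, the span condition moves the factor part of `∑_{M^(1-a)} m^(a)` onto the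
weighted donor sum `∑_{I^(a)} β^(a) m^(a)`, so that the error of the arm-`a` half of the
estimator splits into its noise and weight-estimation term plus a residual built only from
the approximation errors `η`, of size at most `Δ_E (‖β^(a)‖₁ + |M^(1-a)|)`. The two residuals
add up to at most `Δ_E (‖β^(0)‖₁ + ‖β^(1)‖₁ + |M|)`.
-/

open Finset

section

variable {ι κ : Type*} [Fintype κ]

theorem sum_mul_factor_eq_of_span {S T : Finset ι} {lam : ι → κ → ℝ} {w : ι → ℝ} (ρ : κ → ℝ)
    (hspan : ∀ i, ∑ n ∈ S, lam n i = ∑ n ∈ T, w n * lam n i) :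
    ∑ n ∈ T, w n * ∑ i, lam n i * ρ i = ∑ n ∈ S, ∑ i, lam n i * ρ i := by
  simp_rw [mul_sum, ← mul_assoc]
  rw [sum_comm]
  simp_rw [← sum_mul, ← hspan, sum_mul]
  exact sum_comm

theorem weighted_sum_sub_sum_eq_of_span {S T : Finset ι} {lam : ι → κ → ℝ} {ρ : κ → ℝ}
    {w m η : ι → ℝ} (hm : ∀ n, m n = ∑ i, lam n i * ρ i + η n)
    (hspan : ∀ i, ∑ n ∈ S, lam n i = ∑ n ∈ T, w n * lam n i) :
    ∑ n ∈ T, w n * m n - ∑ n ∈ S, m n = ∑ n ∈ T, w n * η n - ∑ n ∈ S, η n := by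
  simp only [hm, mul_add, sum_add_distrib, sum_mul_factor_eq_of_span ρ hspan]
  ring

theorem weighted_estimate_sub_eq {Mₐ S T : Finset ι} {m η ε Y β βh : ι → ℝ} (hMT : Mₐ ⊆ T)
    (hY : ∀ n ∈ T, Y n = m n + ε n)
    (htransfer : ∑ n ∈ T, β n * m n - ∑ n ∈ S, m n = ∑ n ∈ T, β n * η n - ∑ n ∈ S, η n) :
    (∑ n ∈ Mₐ, Y n + ∑ n ∈ T, βh n * Y n) - (∑ n ∈ Mₐ, m n + ∑ n ∈ S, m n)
      = ((∑ n ∈ Mₐ, ε n) + (∑ n ∈ T, β n * ε n) + (∑ n ∈ T, (βh n - β n) * ε n)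
          + (∑ n ∈ T, (βh n - β n) * m n))
        + (∑ n ∈ T, β n * η n - ∑ n ∈ S, η n) := by
  have hYM : ∑ n ∈ Mₐ, Y n = ∑ n ∈ Mₐ, (m n + ε n) := sum_congr rfl fun n hn => hY n (hMT hn)
  have hYT : ∑ n ∈ T, βh n * Y n = ∑ n ∈ T, βh n * (m n + ε n) :=
    sum_congr rfl fun n hn => by rw [hY n hn]
  rw [hYM, hYT]
  simp only [mul_add, sub_mul, sum_add_distrib, sum_sub_distrib]
  linarith

theorem abs_weighted_sum_sub_sum_le {S T : Finset ι} {β η : ι → ℝ} {ΔE : ℝ}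
    (hη : ∀ n, |η n| ≤ ΔE) :
    |∑ n ∈ T, β n * η n - ∑ n ∈ S, η n| ≤ ΔE * (∑ n ∈ T, |β n| + #S) := by
  calc |∑ n ∈ T, β n * η n - ∑ n ∈ S, η n|
      ≤ |∑ n ∈ T, β n * η n| + |∑ n ∈ S, η n| := abs_sub _ _
    _ ≤ ∑ n ∈ T, |β n| * ΔE + ∑ _n ∈ S, ΔE := by
      gcongr
      · refine (abs_sum_le_sum_abs _ _).trans (sum_le_sum fun n _ => ?_)
        rw [abs_mul]
        exact mul_le_mul_of_nonneg_left (hη n) (abs_nonneg _)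
      · exact (abs_sum_le_sum_abs _ _).trans (sum_le_sum fun n _ => hη n)
    _ = ΔE * (∑ n ∈ T, |β n| + #S) := by
      rw [← sum_mul, sum_const, nsmul_eq_mul]
      ring

theorem sum_eq_sum_filter_add_sum_filter_one_sub (A : ι → Fin 2) (M : Finset ι) (a : Fin 2)
    (f : ι → ℝ) :
    ∑ n ∈ M, f n = ∑ n ∈ M.filter (fun n => A n = a), f n
      + ∑ n ∈ M.filter (fun n => A n = 1 - a), f n := by
  rw [← sum_filter_add_sum_filter_not M (fun n => A n = a)]
  congr 2
  exact filter_congr fun n _ => by generalize A n = x; revert x a; decide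

theorem arm_estimate_sub_eq [Fintype ι] (A : ι → Fin 2) (M : Finset ι) (a : Fin 2)
    {m η ε : ι → Fin 2 → ℝ} {Y : ι → ℝ} {lam : ι → κ → ℝ} {ρ : Fin 2 → κ → ℝ}
    {β βh : Fin 2 → ι → ℝ}
    (hm : ∀ n, m n a = ∑ i, lam n i * ρ a i + η n a)
    (hspan : ∀ i, ∑ n ∈ M.filter (fun n => A n = 1 - a), lam n i
              = ∑ n ∈ univ.filter (fun n => A n = a), β a n * lam n i)
    (hY : ∀ n, Y n = m n (A n) + ε n (A n)) :
    (∑ n ∈ M.filter (fun n => A n = a), Y n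
        + ∑ n ∈ univ.filter (fun n => A n = a), βh a n * Y n)
      - ∑ n ∈ M, m n a
    = ((∑ n ∈ M.filter (fun n => A n = a), ε n a)
        + (∑ n ∈ univ.filter (fun n => A n = a), β a n * ε n a)
        + (∑ n ∈ univ.filter (fun n => A n = a), (βh a n - β a n) * ε n a)
        + (∑ n ∈ univ.filter (fun n => A n = a), (βh a n - β a n) * m n a))
      + (∑ n ∈ univ.filter (fun n => A n = a), β a n * η n a
          - ∑ n ∈ M.filter (fun n => A n = 1 - a), η n a) := by
  rw [sum_eq_sum_filter_add_sum_filter_one_sub A M a]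
  refine weighted_estimate_sub_eq (filter_subset_filter _ (subset_univ M)) (fun n hn => ?_)
    (weighted_sum_sub_sum_eq_of_span hm hspan)
  rw [hY, (mem_filter.mp hn).2]

end

theorem abs_inv_mul_sub_le {c k₀ k₁ ΔE B₀ B₁ e₀ e₁ r₀ r₁ : ℝ} (hc : 0 < c) (hk : k₀ + k₁ = c)
    (hr₀ : |r₀| ≤ ΔE * (B₀ + k₁)) (hr₁ : |r₁| ≤ ΔE * (B₁ + k₀)) :
    |1 / c * (e₁ + r₁) - 1 / c * (e₀ + r₀)|
      ≤ ΔE * (1 + (B₀ + B₁) / c) + (1 / c * |e₀| + 1 / c * |e₁|) := by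
  have htri : |(e₁ + r₁) - (e₀ + r₀)| ≤ |e₀| + |e₁| + ΔE * (B₀ + B₁ + c) := by
    calc |(e₁ + r₁) - (e₀ + r₀)| ≤ |e₁| + |r₁| + (|e₀| + |r₀|) :=
          (abs_sub _ _).trans (add_le_add (abs_add_le _ _) (abs_add_le _ _))
      _ ≤ |e₀| + |e₁| + ΔE * (B₀ + B₁ + c) := by rw [← hk]; linarith
  rw [← mul_sub, abs_mul, abs_of_pos (one_div_pos.mpr hc)]
  calc 1 / c * |(e₁ + r₁) - (e₀ + r₀)| ≤ 1 / c * (|e₀| + |e₁| + ΔE * (B₀ + B₁ + c)) := by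
        gcongr
    _ = ΔE * (1 + (B₀ + B₁) / c) + (1 / c * |e₀| + 1 / c * |e₁|) := by
        field_simp
        ring

/-- Proposition 4, deterministic error decomposition.
Units `n ∈ Fin N` with treatments `A n`; `I^(a) = {n | A n = a}`; `M ⊆ [N]` nonempty,
`M^(a) = M ∩ I^(a)`.  Mean potential outcomes `m n a = ⟨λ n, ρ a⟩ + η n a` with
`|η n a| ≤ Δ_E`; weights `β a` satisfy the linear span inclusion; observed outcomes
`Y n = m n (A n) + ε n (A n)`.  For arbitrary `β̂`, with `Δ_{β^(a)} = β̂ a - β a`,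
the linear estimator
`ÂTE = (1/|M|)(∑_{M^(1)} Y + ∑_{I^(1)} β̂¹ Y) - (1/|M|)(∑_{M^(0)} Y + ∑_{I^(0)} β̂⁰ Y)`
and estimand `ATE = (1/|M|) ∑_{M} (m n 1 - m n 0)` satisfy
`|ÂTE - ATE| ≤ Δ_E (1 + (‖β⁰‖₁+‖β¹‖₁)/|M|)
  + ∑_a (1/|M|) |∑_{M^(a)} ε n a + ⟨β a, ε⟩ + ⟨Δ_{β^(a)}, ε⟩ + ⟨Δ_{β^(a)}, m^(a)⟩|`. -/
theorem stmt3
    (N r : ℕ) (A : Fin N → Fin 2)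
    (m η ε : Fin N → Fin 2 → ℝ) (Y : Fin N → ℝ)
    (lam : Fin N → Fin r → ℝ) (ρ : Fin 2 → Fin r → ℝ)
    (M : Finset (Fin N)) (hM : M.Nonempty)
    (β βh : Fin 2 → Fin N → ℝ) (ΔE : ℝ)
    (hm : ∀ n (a : Fin 2), m n a = (∑ i, lam n i * ρ a i) + η n a)
    (hη : ∀ n (a : Fin 2), |η n a| ≤ ΔE)
    (hspan : ∀ (a : Fin 2) i, ∑ n ∈ M.filter (fun n => A n = 1 - a), lam n i
              = ∑ n ∈ univ.filter (fun n => A n = a), β a n * lam n i)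
    (hY : ∀ n, Y n = m n (A n) + ε n (A n)) :
    |(((1 : ℝ) / M.card) * (∑ n ∈ M.filter (fun n => A n = 1), Y n
          + ∑ n ∈ univ.filter (fun n => A n = 1), βh 1 n * Y n)
      - ((1 : ℝ) / M.card) * (∑ n ∈ M.filter (fun n => A n = 0), Y n
          + ∑ n ∈ univ.filter (fun n => A n = 0), βh 0 n * Y n))
      - ((1 : ℝ) / M.card) * (∑ n ∈ M, (m n 1 - m n 0))|
      ≤ ΔE * (1 + ((∑ n ∈ univ.filter (fun n => A n = 0), |β 0 n|)
                   + ∑ n ∈ univ.filter (fun n => A n = 1), |β 1 n|) / M.card)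
        + ∑ a : Fin 2, ((1 : ℝ) / M.card) *
            |(∑ n ∈ M.filter (fun n => A n = a), ε n a)
              + (∑ n ∈ univ.filter (fun n => A n = a), β a n * ε n a)
              + (∑ n ∈ univ.filter (fun n => A n = a), (βh a n - β a n) * ε n a)
              + (∑ n ∈ univ.filter (fun n => A n = a), (βh a n - β a n) * m n a)| := by
  have hcard : ((M.filter (fun n => A n = 0)).card : ℝ) + (M.filter (fun n => A n = 1)).card
      = M.card := by
    exact_mod_cast ((card_eq_sum_card_fiberwise fun n _ => mem_univ (A n)).trans
      (Fin.sum_univ_two _)).symm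
  have key (a : Fin 2) :=
    arm_estimate_sub_eq A M a (hm · a) (hspan a) hY (βh := βh)
  have hres (a : Fin 2) :=
    abs_weighted_sum_sub_sum_le (T := univ.filter (fun n => A n = a))
      (S := M.filter (fun n => A n = 1 - a)) (β := β a) (hη · a)
  rw [sum_sub_distrib, mul_sub, sub_sub_sub_comm, ← mul_sub, ← mul_sub, key 1, key 0,
    Fin.sum_univ_two]
  exact abs_inv_mul_sub_le (by exact_mod_cast hM.card_pos) hcard (hres 0) (hres 1)
end

section
/- Let λ ∈ ℝ^r and λ_1, …, λ_N ∈ ℝ^r. Suppose {1,…,N} is partitioned into K pairwise disjoint blocks B_1, …, B_K, and for each k ∈ {1,…,K} there is a weight vector β^k ∈ ℝ^N supported on B_k (i.e., β^k_i = 0 for i ∉ B_k) such that λ = Σ_{i=1}^N β^k_i λ_i and ‖β^k‖_2 ≤ B. Then the averaged vector β̃ = (1/K) Σ_{k=1}^K β^k satisfies λ = Σ_{i=1}^N β̃_i λ_i and ‖β̃‖_2 ≤ B/√K. -/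
open Finset

/-- block-averaging step of Proposition 5.
Let `λ ∈ ℝ^r` and `λ_1,…,λ_N ∈ ℝ^r`.  If `{1,…,N}` is partitioned into `K` pairwise
disjoint blocks `B_1,…,B_K` and for each `k` there is a weight vector `β^k ∈ ℝ^N`
supported on `B_k` with `λ = ∑_i β^k_i λ_i` and `‖β^k‖₂ ≤ B`, then the averaged
vector `β̃ = (1/K) ∑_k β^k` satisfies `λ = ∑_i β̃_i λ_i` and `‖β̃‖₂ ≤ B/√K`. -/
theorem stmt5
    (r N K : ℕ) (hK : 0 < K)
    (lam : Fin N → Fin r → ℝ) (lam0 : Fin r → ℝ)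
    (B : ℝ) (Bl : Fin K → Finset (Fin N))
    (hdisj : ∀ k k' : Fin K, k ≠ k' → Disjoint (Bl k) (Bl k'))
    (hcover : Finset.univ.biUnion Bl = (Finset.univ : Finset (Fin N)))
    (β : Fin K → Fin N → ℝ)
    (hsupp : ∀ (k : Fin K) (i : Fin N), i ∉ Bl k → β k i = 0)
    (hrep : ∀ k : Fin K, lam0 = ∑ i, β k i • lam i)
    (hnorm : ∀ k : Fin K, Real.sqrt (∑ i, (β k i) ^ 2) ≤ B) :
    lam0 = ∑ i, ((K : ℝ)⁻¹ * ∑ k, β k i) • lam i ∧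
    Real.sqrt (∑ i, ((K : ℝ)⁻¹ * ∑ k, β k i) ^ 2) ≤ B / Real.sqrt K := by
  have hKR : (0:ℝ) < (K:ℝ) := by exact_mod_cast hK
  have hB : 0 ≤ B := le_trans (Real.sqrt_nonneg _) (hnorm ⟨0, hK⟩)
  -- key: for each i, the summands over k are supported on a single k
  have hkey : ∀ i : Fin N, (∑ k, β k i) ^ 2 = ∑ k, (β k i) ^ 2 := by
    intro i
    have hi : i ∈ Finset.univ.biUnion Bl := by rw [hcover]; exact mem_univ i
    obtain ⟨k0, -, hk0⟩ := Finset.mem_biUnion.mp hi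
    have hz : ∀ k, k ≠ k0 → β k i = 0 := by
      intro k hk
      apply hsupp
      intro hki
      exact (Finset.disjoint_left.mp (hdisj k k0 hk) hki) hk0
    have h1 : (∑ k, β k i) = β k0 i :=
      Finset.sum_eq_single k0 (fun k _ hk => hz k hk) (fun h => absurd (mem_univ k0) h)
    have h2 : (∑ k, (β k i) ^ 2) = (β k0 i) ^ 2 :=
      Finset.sum_eq_single k0 (fun k _ hk => by rw [hz k hk]; ring)
        (fun h => absurd (mem_univ k0) h)
    rw [h1, h2]
  constructor
  · have : (∑ i, ((K : ℝ)⁻¹ * ∑ k, β k i) • lam i)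
        = (K:ℝ)⁻¹ • ∑ k, ∑ i, β k i • lam i := by
      have h1 : ∀ i : Fin N, ((K : ℝ)⁻¹ * ∑ k, β k i) • lam i
          = ∑ k, ((K:ℝ)⁻¹ * β k i) • lam i := by
        intro i
        rw [Finset.mul_sum, Finset.sum_smul]
      rw [Finset.sum_congr rfl (fun i _ => h1 i), Finset.sum_comm, Finset.smul_sum]
      refine Finset.sum_congr rfl fun k _ => ?_
      rw [Finset.smul_sum]
      exact Finset.sum_congr rfl fun i _ => (smul_smul _ _ _).symm
    rw [this]
    have : (∑ k : Fin K, ∑ i, β k i • lam i) = (K:ℝ) • lam0 := by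
      rw [Finset.sum_congr rfl (fun k _ => (hrep k).symm)]
      simp [Finset.sum_const, ← Nat.cast_smul_eq_nsmul ℝ]
    rw [this, smul_smul, inv_mul_cancel₀ hKR.ne', one_smul]
  · have hsum : (∑ i, ((K : ℝ)⁻¹ * ∑ k, β k i) ^ 2) ≤ B ^ 2 / K := by
      have : (∑ i, ((K : ℝ)⁻¹ * ∑ k, β k i) ^ 2)
          = (K:ℝ)⁻¹ ^ 2 * ∑ k, ∑ i, (β k i) ^ 2 := by
        have h1 : ∀ i : Fin N, ((K : ℝ)⁻¹ * ∑ k, β k i) ^ 2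
            = ∑ k, (K:ℝ)⁻¹ ^ 2 * (β k i) ^ 2 := by
          intro i
          rw [mul_pow, hkey i, Finset.mul_sum]
        rw [Finset.sum_congr rfl (fun i _ => h1 i), Finset.sum_comm, Finset.mul_sum]
        congr 1; ext k
        rw [Finset.mul_sum]
      rw [this]
      have hbd : ∀ k : Fin K, (∑ i, (β k i) ^ 2) ≤ B ^ 2 := by
        intro k
        have hnn : (0:ℝ) ≤ ∑ i, (β k i) ^ 2 :=
          Finset.sum_nonneg (fun i _ => sq_nonneg (β k i))
        calc (∑ i, (β k i) ^ 2) = (Real.sqrt (∑ i, (β k i) ^ 2)) ^ 2 :=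
              (Real.sq_sqrt hnn).symm
          _ ≤ B ^ 2 := pow_le_pow_left₀ (Real.sqrt_nonneg _) (hnorm k) 2
      calc (K:ℝ)⁻¹ ^ 2 * ∑ k, ∑ i, (β k i) ^ 2
          ≤ (K:ℝ)⁻¹ ^ 2 * ∑ k : Fin K, B ^ 2 := by
            apply mul_le_mul_of_nonneg_left
            · exact Finset.sum_le_sum (fun k _ => hbd k)
            · positivity
        _ = B ^ 2 / K := by
            rw [Finset.sum_const, Finset.card_univ, Fintype.card_fin]
            field_simp
            ring
    calc Real.sqrt (∑ i, ((K : ℝ)⁻¹ * ∑ k, β k i) ^ 2)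
        ≤ Real.sqrt (B ^ 2 / K) := Real.sqrt_le_sqrt hsum
      _ = B / Real.sqrt K := by
          rw [Real.sqrt_div (sq_nonneg B), Real.sqrt_sq hB]
end

section
/- Let λ_1, …, λ_{N_a} ∈ ℝ^r, let S ⊆ ℝ^r be a finite multiset of target vectors {λ_n : n ∈ M^(1−a)} of size M_{1−a}, and suppose {1,…,N_a} is partitioned into K pairwise disjoint blocks each of size m = N_a/K such that, for every target index n ∈ M^(1−a) and every block k, there is a weight vector β^{n,k} ∈ ℝ^{N_a} supported on block k with λ_n = Σ_i β^{n,k}_i λ_i and ‖β^{n,k}‖_2 ≤ B. Then there exists β̃ ∈ ℝ^{N_a} with Σ_{i=1}^{N_a} β̃_i λ_i = Σ_{n∈M^(1−a)} λ_n and ‖β̃‖_2 ≤ M_{1−a} · B / √K; consequently, the minimum-ℓ2-norm solution β^(a) of Σ_i β_i λ_i = Σ_{n∈M^(1−a)} λ_n satisfies ‖β^(a)‖_2 ≤ M_{1−a} · B / √K. (This is the quantitative content of Proposition 5 on disperse weights.) -/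
open Finset

lemma euclid_norm_eq {n : ℕ} (x : EuclideanSpace ℝ (Fin n)) :
    ‖x‖ = Real.sqrt (∑ i, x i ^ 2) := by
  rw [EuclideanSpace.norm_eq]
  congr 1
  exact Finset.sum_congr rfl fun i _ => by rw [Real.norm_eq_abs, sq_abs]

/-- Proposition 5: disperse weights, quantitative form.
Latent factors `λ_1,…,λ_{N_a} ∈ ℝ^r`; target vectors `λTar n`, `n ∈ Fin M1a`
(the multiset `{λ_n : n ∈ M^(1-a)}` of size `M_{1-a}`).  Suppose `{1,…,N_a}` is
partitioned into `K` pairwise disjoint blocks each of size `m = N_a/K` such that for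
every target `n` and every block `k` there is `β^{n,k} ∈ ℝ^{N_a}` supported on block
`k` with `λTar n = ∑_i β^{n,k}_i λ_i` and `‖β^{n,k}‖₂ ≤ B`.  Then some `β̃`
satisfies `∑_i β̃_i λ_i = ∑_n λTar n` with `‖β̃‖₂ ≤ M1a·B/√K`; consequently any
minimum-ℓ2-norm solution `β^(a)` of this linear system satisfies
`‖β^(a)‖₂ ≤ M1a·B/√K`. -/
theorem stmt6
    (r Na K msize M1a : ℕ) (hK : 0 < K)
    (lam : Fin Na → Fin r → ℝ) (lamTar : Fin M1a → Fin r → ℝ)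
    (B : ℝ) (Bl : Fin K → Finset (Fin Na))
    (hdisj : ∀ k k' : Fin K, k ≠ k' → Disjoint (Bl k) (Bl k'))
    (hcover : Finset.univ.biUnion Bl = (Finset.univ : Finset (Fin Na)))
    (hsize : ∀ k, (Bl k).card = msize) (hm : msize = Na / K)
    (β : Fin M1a → Fin K → Fin Na → ℝ)
    (hsupp : ∀ (n : Fin M1a) (k : Fin K) (i : Fin Na), i ∉ Bl k → β n k i = 0)
    (hrep : ∀ (n : Fin M1a) (k : Fin K), lamTar n = ∑ i, β n k i • lam i)
    (hnorm : ∀ (n : Fin M1a) (k : Fin K), Real.sqrt (∑ i, (β n k i) ^ 2) ≤ B) :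
    (∃ βt : Fin Na → ℝ,
        (∑ i, βt i • lam i) = (∑ n, lamTar n) ∧
        Real.sqrt (∑ i, (βt i) ^ 2) ≤ M1a * B / Real.sqrt K) ∧
    (∀ βa : Fin Na → ℝ,
        ((∑ i, βa i • lam i) = (∑ n, lamTar n) ∧
          (∀ β' : Fin Na → ℝ, (∑ i, β' i • lam i) = (∑ n, lamTar n) →
            Real.sqrt (∑ i, (βa i) ^ 2) ≤ Real.sqrt (∑ i, (β' i) ^ 2))) →
        Real.sqrt (∑ i, (βa i) ^ 2) ≤ M1a * B / Real.sqrt K) := by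
  have hK0 : (0:ℝ) < K := by exact_mod_cast hK
  have hsqK : (0:ℝ) < Real.sqrt K := Real.sqrt_pos.mpr hK0
  -- the averaged vector
  set βt : Fin Na → ℝ := fun i => (K:ℝ)⁻¹ * ∑ n, ∑ k, β n k i with hβt
  -- squares split over disjoint blocks
  have key : ∀ n i, (∑ k, β n k i) ^ 2 = ∑ k, (β n k i) ^ 2 := by
    intro n i
    obtain ⟨k0, -, hk0⟩ := Finset.mem_biUnion.mp (hcover ▸ Finset.mem_univ i)
    have hz : ∀ k ∈ Finset.univ, k ≠ k0 → β n k i = 0 := by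
      intro k _ hk
      refine hsupp n k i fun hi => ?_
      exact (Finset.disjoint_left.mp (hdisj k k0 hk) hi) hk0
    rw [Finset.sum_eq_single k0 hz (by simp),
        Finset.sum_eq_single k0 (fun k hk h => by rw [hz k hk h]; ring) (by simp)]
  -- per-n norm bound
  have hvnorm : ∀ n : Fin M1a, Real.sqrt (∑ i, (∑ k, β n k i) ^ 2) ≤ Real.sqrt K * B := by
    intro n
    have hB : 0 ≤ B := le_trans (Real.sqrt_nonneg _) (hnorm n ⟨0, hK⟩)
    have h1 : ∑ i, (∑ k, β n k i) ^ 2 = ∑ k, ∑ i, (β n k i) ^ 2 := by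
      rw [Finset.sum_congr rfl fun i _ => key n i, Finset.sum_comm]
    have h2 : ∀ k : Fin K, ∑ i, (β n k i) ^ 2 ≤ B ^ 2 := by
      intro k
      have hS : 0 ≤ ∑ i, (β n k i) ^ 2 := Finset.sum_nonneg fun _ _ => sq_nonneg _
      calc ∑ i, (β n k i) ^ 2 = Real.sqrt (∑ i, (β n k i) ^ 2) ^ 2 :=
            (Real.sq_sqrt hS).symm
        _ ≤ B ^ 2 := pow_le_pow_left₀ (Real.sqrt_nonneg _) (hnorm n k) 2
    calc Real.sqrt (∑ i, (∑ k, β n k i) ^ 2)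
        ≤ Real.sqrt (∑ _k : Fin K, B ^ 2) := by
          rw [h1]; exact Real.sqrt_le_sqrt (Finset.sum_le_sum fun k _ => h2 k)
      _ = Real.sqrt K * B := by
          rw [Finset.sum_const, Finset.card_univ, Fintype.card_fin, nsmul_eq_mul,
            Real.sqrt_mul (by positivity), Real.sqrt_sq hB]
  -- equation
  have heq : (∑ i, βt i • lam i) = (∑ n, lamTar n) := by
    have step1 : ∀ i : Fin Na,
        βt i • lam i = (K:ℝ)⁻¹ • ∑ n, ∑ k, β n k i • lam i := by
      intro i
      show ((K:ℝ)⁻¹ * ∑ n, ∑ k, β n k i) • lam i = _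
      rw [mul_smul]
      congr 1
      rw [Finset.sum_smul]
      exact Finset.sum_congr rfl fun n _ => Finset.sum_smul
    calc ∑ i, βt i • lam i
        = ∑ i, (K:ℝ)⁻¹ • ∑ n, ∑ k, β n k i • lam i :=
          Finset.sum_congr rfl fun i _ => step1 i
      _ = (K:ℝ)⁻¹ • ∑ i, ∑ n, ∑ k, β n k i • lam i := (Finset.smul_sum).symm
      _ = (K:ℝ)⁻¹ • ∑ n, ∑ k, ∑ i, β n k i • lam i := by
          congr 1
          rw [Finset.sum_comm]
          exact Finset.sum_congr rfl fun n _ => Finset.sum_comm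
      _ = (K:ℝ)⁻¹ • ∑ n : Fin M1a, (K:ℝ) • lamTar n := by
          congr 1
          refine Finset.sum_congr rfl fun n _ => ?_
          rw [Finset.sum_congr rfl fun k _ => (hrep n k).symm, Finset.sum_const,
            Finset.card_univ, Fintype.card_fin, ← Nat.cast_smul_eq_nsmul ℝ]
      _ = ∑ n, lamTar n := by
          rw [Finset.smul_sum]
          refine Finset.sum_congr rfl fun n _ => ?_
          rw [smul_smul, inv_mul_cancel₀ (ne_of_gt hK0), one_smul]
  -- norm bound for βt
  have hbound : Real.sqrt (∑ i, (βt i) ^ 2) ≤ M1a * B / Real.sqrt K := by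
    set v : Fin M1a → EuclideanSpace ℝ (Fin Na) := fun n => WithLp.toLp 2 (fun i => ∑ k, β n k i) with hv
    have hw : ∀ i, βt i = ((K:ℝ)⁻¹ • ∑ n, v n : EuclideanSpace ℝ (Fin Na)) i := by
      intro i
      have hsum : (∑ n, v n : EuclideanSpace ℝ (Fin Na)) i = ∑ n, v n i :=
        by rw [WithLp.ofLp_sum]; exact Finset.sum_apply i Finset.univ (fun n => (v n).ofLp)
      show (K:ℝ)⁻¹ * ∑ n, ∑ k, β n k i = (K:ℝ)⁻¹ * (∑ n, v n : EuclideanSpace ℝ (Fin Na)) i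
      rw [hsum]
    have : Real.sqrt (∑ i, (βt i) ^ 2)
        = ‖((K:ℝ)⁻¹ • ∑ n, v n : EuclideanSpace ℝ (Fin Na))‖ := by
      rw [euclid_norm_eq]
      congr 1
      refine Finset.sum_congr rfl fun i _ => ?_
      rw [hw i]
    rw [this, norm_smul]
    have h1 : ‖∑ n, v n‖ ≤ (M1a : ℝ) * (Real.sqrt K * B) := by
      calc ‖∑ n, v n‖ ≤ ∑ n, ‖v n‖ := norm_sum_le _ _
        _ ≤ ∑ _n : Fin M1a, Real.sqrt K * B := by
            refine Finset.sum_le_sum fun n _ => ?_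
            rw [euclid_norm_eq]
            exact hvnorm n
        _ = (M1a : ℝ) * (Real.sqrt K * B) := by
            rw [Finset.sum_const, Finset.card_univ, Fintype.card_fin, nsmul_eq_mul]
    have hnn : ‖(K:ℝ)⁻¹‖ = (K:ℝ)⁻¹ := by
      rw [Real.norm_eq_abs, abs_of_pos (by positivity)]
    rw [hnn]
    have hKsq : (K:ℝ) = Real.sqrt K * Real.sqrt K := (Real.mul_self_sqrt hK0.le).symm
    calc (K:ℝ)⁻¹ * ‖∑ n, v n‖ ≤ (K:ℝ)⁻¹ * ((M1a:ℝ) * (Real.sqrt K * B)) := by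
          exact mul_le_mul_of_nonneg_left h1 (by positivity)
      _ = M1a * B / Real.sqrt K := by
          field_simp; linear_combination (M1a : ℝ) * B * Real.mul_self_sqrt hK0.le
  refine ⟨⟨βt, heq, hbound⟩, fun βa ⟨hsol, hmin⟩ => le_trans (hmin βt heq) hbound⟩
end
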